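/- Let N ≥ 1 and A, t be natural numbers, and set μ = N·(1 - (1 - 1/N)^A). Then the following identity holds in the rationals: Σ_{k=0}^{N} (k - μ)^t · (N)_k · S(A,k) / N^A = Σ C(t,u) · (-1)^{v+w} · S(v+w, v) · N^u · (N)_v · (1 - v/N)^A · (1 - 1/N)^{u·A}, where the sum on the right ranges over all triples of natural numbers (u,v,w) with u + v + w = t. The left side is the t-th central moment of the number of unique original items in a bootstrap sample of A items drawn with replacement from N items. -/
import Mathlib


/-- Stirling numbers of the second kind: `stirling A k` is the number of
partitions of a set of `A` labelled elements into exactly `k` nonempty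
unlabelled blocks. -/
def stirling : ℕ → ℕ → ℕ
  | 0, 0 => 1
  | 0, _ + 1 => 0
  | _ + 1, 0 => 0
  | n + 1, k + 1 => (k + 1) * stirling n (k + 1) + stirling n k

lemma stirling_eq_zero_of_lt : ∀ {n k : ℕ}, n < k → stirling n k = 0
  | 0, _ + 1, _ => rfl
  | n + 1, k + 1, h => by
    have h1 : n < k + 1 := by omega
    have h2 : n < k := by omega
    simp [stirling, stirling_eq_zero_of_lt h1, stirling_eq_zero_of_lt h2]

lemma descFactorial_mul_self (M k : ℕ) :
    M * M.descFactorial k = M.descFactorial (k + 1) + k * M.descFactorial k := by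
  rw [Nat.descFactorial_succ]
  rcases le_or_gt k M with h | h
  · rw [← Nat.add_mul, Nat.sub_add_cancel h]
  · rw [Nat.descFactorial_eq_zero_iff_lt.2 h]; simp

lemma sum_stirling_descFactorial (A M : ℕ) :
    ∑ k ∈ Finset.range (A + 1), stirling A k * M.descFactorial k = M ^ A := by
  induction A with
  | zero => simp [stirling]
  | succ A ih =>
    rw [Finset.sum_range_succ' (fun k => stirling (A + 1) k * M.descFactorial k)]
    have h0 : stirling (A + 1) 0 * M.descFactorial 0 = 0 := by simp [stirling]
    rw [h0, add_zero]
    have key : ∀ k, stirling (A + 1) (k + 1) * M.descFactorial (k + 1)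
        = (k + 1) * stirling A (k + 1) * M.descFactorial (k + 1)
          + stirling A k * M.descFactorial (k + 1) := by
      intro k; simp [stirling]; ring
    rw [Finset.sum_congr rfl fun k _ => key k, Finset.sum_add_distrib]
    have e1 : ∑ k ∈ Finset.range (A + 1),
        (k + 1) * stirling A (k + 1) * M.descFactorial (k + 1)
        = ∑ k ∈ Finset.range (A + 1), k * stirling A k * M.descFactorial k := by
      rw [Finset.sum_range_succ, stirling_eq_zero_of_lt (Nat.lt_succ_self A)]
      rw [Finset.sum_range_succ' (fun k => k * stirling A k * M.descFactorial k)]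
      simp
    rw [e1]
    have e2 : M ^ (A + 1) = ∑ k ∈ Finset.range (A + 1),
        stirling A k * (M * M.descFactorial k) := by
      rw [pow_succ, ← ih, Finset.sum_mul]
      exact Finset.sum_congr rfl fun k _ => by ring
    rw [e2, ← Finset.sum_add_distrib]
    refine Finset.sum_congr rfl fun k _ => ?_
    rw [descFactorial_mul_self]
    ring

lemma sum_stirling_descFactorial' (A M B : ℕ) (h : M ≤ B) :
    ∑ k ∈ Finset.range (B + 1), stirling A k * M.descFactorial k = M ^ A := by
  have big : ∀ C, A ≤ C →
      ∑ k ∈ Finset.range (C + 1), stirling A k * M.descFactorial k = M ^ A := by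
    intro C hC
    rw [← sum_stirling_descFactorial A M]
    symm
    apply Finset.sum_subset
    · exact Finset.range_subset_range.2 (by omega)
    · intro k _ hk
      rw [stirling_eq_zero_of_lt (by simp at hk ⊢; omega : A < k), zero_mul]
  rw [← big (A + B) (by omega)]
  apply Finset.sum_subset
  · exact Finset.range_subset_range.2 (by omega)
  · intro k _ hk
    rw [Nat.descFactorial_eq_zero_iff_lt.2 (by simp at hk ⊢; omega : M < k), mul_zero]

lemma descFactorial_add (n k : ℕ) :
    ∀ v, n.descFactorial (k + v) = n.descFactorial k * (n - k).descFactorial v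
  | 0 => by simp
  | v + 1 => by
    rw [← Nat.add_assoc, Nat.descFactorial_succ, Nat.descFactorial_succ,
      descFactorial_add n k v, Nat.sub_sub]
    ring

lemma lemE (N A v : ℕ) :
    ∑ k ∈ Finset.range (N + 1), stirling A k * N.descFactorial (k + v)
      = N.descFactorial v * (N - v) ^ A := by
  have : ∀ k, N.descFactorial (k + v) = N.descFactorial v * (N - v).descFactorial k := by
    intro k; rw [Nat.add_comm, descFactorial_add]
  rw [Finset.sum_congr rfl fun k _ => by rw [this k]]
  rw [← sum_stirling_descFactorial' A (N - v) N (Nat.sub_le N v), Finset.mul_sum]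
  exact Finset.sum_congr rfl fun k _ => by ring

lemma lemL2 (N A s : ℕ) (hN : 1 ≤ N) :
    ∑ k ∈ Finset.range (N + 1),
        ((k : ℚ) - N) ^ s * N.descFactorial k * stirling A k / (N : ℚ) ^ A
      = (-1) ^ s * ∑ v ∈ Finset.range (s + 1),
          (stirling s v : ℚ) * N.descFactorial v * (1 - (v : ℚ) / N) ^ A := by
  have hN0 : (N : ℚ) ≠ 0 := Nat.cast_ne_zero.2 (by omega)
  have step1 : ∑ k ∈ Finset.range (N + 1),
        ((k : ℚ) - N) ^ s * N.descFactorial k * stirling A k / (N : ℚ) ^ A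
      = ∑ k ∈ Finset.range (N + 1), ∑ v ∈ Finset.range (s + 1),
          (-1) ^ s * ((stirling s v : ℚ) *
            ((stirling A k * N.descFactorial (k + v) : ℕ) : ℚ) / (N : ℚ) ^ A) := by
    refine Finset.sum_congr rfl fun k hk => ?_
    have hk' : k ≤ N := Nat.lt_succ_iff.mp (Finset.mem_range.mp hk)
    have h1 : ((k : ℚ) - N) ^ s = (-1) ^ s * ((N - k : ℕ) : ℚ) ^ s := by
      rw [Nat.cast_sub hk', ← neg_pow, neg_sub]
    have h2 : ((N - k : ℕ) : ℚ) ^ s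
        = ∑ v ∈ Finset.range (s + 1),
            (stirling s v : ℚ) * ((N - k).descFactorial v : ℚ) := by
      rw [← Nat.cast_pow, ← sum_stirling_descFactorial s (N - k)]
      push_cast; rfl
    rw [h1, h2, Finset.mul_sum, Finset.sum_mul, Finset.sum_mul, Finset.sum_div]
    refine Finset.sum_congr rfl fun v _ => ?_
    rw [descFactorial_add N k v]
    push_cast
    ring
  rw [step1, Finset.sum_comm, Finset.mul_sum]
  refine Finset.sum_congr rfl fun v _ => ?_
  rw [← Finset.mul_sum, ← Finset.sum_div, ← Finset.mul_sum, ← Nat.cast_sum,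
    lemE N A v]
  by_cases hv : v ≤ N
  · have hc : ((N - v : ℕ) : ℚ) = (N : ℚ) - v := Nat.cast_sub hv
    have h3 : (1 - (v : ℚ) / N) = ((N : ℚ) - v) / N := by field_simp
    rw [h3, div_pow]
    push_cast [hc]
    ring
  · rw [Nat.descFactorial_eq_zero_iff_lt.2 (by omega)]
    push_cast
    ring

/-- With `μ = N·(1 - (1 - 1/N)^A)` the mean number of unique items, the `t`-th
central moment of the number of unique original items in a bootstrap sample of
`A` items drawn with replacement from `N` items satisfies
`Σ_{k=0}^{N} (k - μ)^t · (N)_k · S(A,k) / N^A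
  = Σ_{u+v+w=t} C(t,u) · (-1)^{v+w} · S(v+w,v) · N^u · (N)_v · (1 - v/N)^A ·
      (1 - 1/N)^{u·A}`. -/
theorem central_moment_formula (N A t : ℕ) (hN : 1 ≤ N)
    (μ : ℚ) (hμ : μ = (N : ℚ) * (1 - (1 - 1 / (N : ℚ)) ^ A)) :
    ∑ k ∈ Finset.range (N + 1),
        ((k : ℚ) - μ) ^ t * N.descFactorial k * stirling A k / (N : ℚ) ^ A
      = ∑ u ∈ Finset.range (t + 1), ∑ v ∈ Finset.range (t - u + 1),
          (t.choose u : ℚ) * (-1) ^ (v + (t - u - v)) *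
            stirling (v + (t - u - v)) v * (N : ℚ) ^ u * N.descFactorial v *
            (1 - (v : ℚ) / (N : ℚ)) ^ A * (1 - 1 / (N : ℚ)) ^ (u * A) := by
  set c : ℚ := (1 - 1 / (N : ℚ)) ^ A with hc
  have expand : ∀ k : ℕ, ((k : ℚ) - μ) ^ t
      = ∑ u ∈ Finset.range (t + 1),
          ((N : ℚ) * c) ^ u * ((k : ℚ) - N) ^ (t - u) * t.choose u := by
    intro k
    rw [show (k : ℚ) - μ = (N : ℚ) * c + ((k : ℚ) - N) by rw [hμ]; ring]
    exact add_pow _ _ t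
  have lhs_eq : ∑ k ∈ Finset.range (N + 1),
        ((k : ℚ) - μ) ^ t * N.descFactorial k * stirling A k / (N : ℚ) ^ A
      = ∑ u ∈ Finset.range (t + 1), ((N : ℚ) * c) ^ u * t.choose u *
          ∑ k ∈ Finset.range (N + 1),
            ((k : ℚ) - N) ^ (t - u) * N.descFactorial k * stirling A k
              / (N : ℚ) ^ A := by
    have e1 : ∀ k ∈ Finset.range (N + 1),
        ((k : ℚ) - μ) ^ t * N.descFactorial k * stirling A k / (N : ℚ) ^ A
        = ∑ u ∈ Finset.range (t + 1), ((N : ℚ) * c) ^ u * t.choose u *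
            (((k : ℚ) - N) ^ (t - u) * N.descFactorial k * stirling A k
              / (N : ℚ) ^ A) := by
      intro k _
      rw [expand k, Finset.sum_mul, Finset.sum_mul, Finset.sum_div]
      exact Finset.sum_congr rfl fun u _ => by ring
    rw [Finset.sum_congr rfl e1, Finset.sum_comm]
    exact Finset.sum_congr rfl fun u _ => by rw [Finset.mul_sum]
  rw [lhs_eq]
  refine Finset.sum_congr rfl fun u hu => ?_
  rw [lemL2 N A (t - u) hN, Finset.mul_sum, Finset.mul_sum]
  refine Finset.sum_congr rfl fun v hv => ?_
  have hv' : v ≤ t - u := Nat.lt_succ_iff.mp (Finset.mem_range.mp hv)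
  have hvw : v + (t - u - v) = t - u := by omega
  rw [hvw]
  rw [show (u * A) = A * u by ring, pow_mul, ← hc]
  ring
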